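/- arXiv:1406.3679 — 4 statements merged into one kernel-verified Lean document; each statement's English description precedes it below -/
import Mathlib

section
/- For integers n₁, n₂ ≥ 1, the characteristic polynomial of the distance matrix of G₁ = K₁∨(K_{n₁}∪K_{n₂}) satisfies det(λI − D(G₁)) = (λ+1)^{n₁+n₂−2}·f(λ), where f(λ) = λ³ − (n₁+n₂−2)λ² − (3n₁n₂+2n₁+2n₂−1)λ − 2n₁n₂ − n₁ − n₂. -/
/-- The distance matrix of a graph `G`, with real entries: the `(u,v)` entry is the
distance between `u` and `v` in `G`. -/
noncomputable def distMatrix {V : Type*} [Fintype V] (G : SimpleGraph V) : Matrix V V ℝ :=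
  Matrix.of fun u v => (G.dist u v : ℝ)

/-- The distance matrix is real symmetric (Hermitian). -/
theorem distMatrix_isHermitian {V : Type*} [Fintype V] (G : SimpleGraph V) :
    (distMatrix G).IsHermitian := by
  unfold Matrix.IsHermitian
  ext u v
  simp [distMatrix, Matrix.conjTranspose_apply, SimpleGraph.dist_comm]

/-- The multiset of eigenvalues of the distance matrix of `G` (with multiplicity). -/
noncomputable def distEigMultiset {V : Type*} [Fintype V] [DecidableEq V]
    (G : SimpleGraph V) : Multiset ℝ :=
  Finset.univ.val.map (distMatrix_isHermitian G).eigenvalues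

/-- `distEig G k` is `λ_k(G)`, the `k`-th distance eigenvalue of `G` (1-indexed),
where the distance eigenvalues are arranged in non-increasing order. -/
noncomputable def distEig {V : Type*} [Fintype V] [DecidableEq V]
    (G : SimpleGraph V) (k : ℕ) : ℝ :=
  (((distEigMultiset G).sort (· ≤ ·)).reverse).getD (k - 1) 0

/-- The disjoint union `G ∪ H` of two vertex-disjoint graphs. -/
def graphSum {α β : Type*} (G : SimpleGraph α) (H : SimpleGraph β) : SimpleGraph (α ⊕ β) where
  Adj x y :=
    match x, y with
    | Sum.inl a, Sum.inl b => G.Adj a b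
    | Sum.inr a, Sum.inr b => H.Adj a b
    | _, _ => False
  symm := ⟨by
    rintro (a | a) (b | b) h
    · exact G.adj_symm h
    · exact h
    · exact h
    · exact H.adj_symm h⟩
  loopless := ⟨by
    rintro (a | a) h
    · exact G.irrefl h
    · exact H.irrefl h⟩

/-- The join `G ∨ H` of two vertex-disjoint graphs: their disjoint union together with
all edges joining a vertex of `G` and a vertex of `H`. -/
def graphJoin {α β : Type*} (G : SimpleGraph α) (H : SimpleGraph β) : SimpleGraph (α ⊕ β) where
  Adj x y :=
    match x, y with
    | Sum.inl a, Sum.inl b => G.Adj a b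
    | Sum.inr a, Sum.inr b => H.Adj a b
    | Sum.inl _, Sum.inr _ => True
    | Sum.inr _, Sum.inl _ => True
  symm := ⟨by
    rintro (a | a) (b | b) h
    · exact G.adj_symm h
    · trivial
    · trivial
    · exact H.adj_symm h⟩
  loopless := ⟨by
    rintro (a | a) h
    · exact G.irrefl h
    · exact H.irrefl h⟩

/-- `K₁ ∨ (K_{n₁} ∪ K_{n₂})`. -/
def joinCliques2 (n₁ n₂ : ℕ) : SimpleGraph (Fin 1 ⊕ (Fin n₁ ⊕ Fin n₂)) :=
  graphJoin ⊤ (graphSum ⊤ ⊤)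

/-- `K₁ ∨ (K_{n₁} ∪ K_{n₂} ∪ K_{n₃})`. -/
def joinCliques3 (n₁ n₂ n₃ : ℕ) : SimpleGraph (Fin 1 ⊕ (Fin n₁ ⊕ (Fin n₂ ⊕ Fin n₃))) :=
  graphJoin ⊤ (graphSum ⊤ (graphSum ⊤ ⊤))

/-- `K₁ ∨ (K_{n₁} ∪ K_{n₂} ∪ K_{n₃} ∪ K_{n₄})`. -/
def joinCliques4 (n₁ n₂ n₃ n₄ : ℕ) :
    SimpleGraph (Fin 1 ⊕ (Fin n₁ ⊕ (Fin n₂ ⊕ (Fin n₃ ⊕ Fin n₄)))) :=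
  graphJoin ⊤ (graphSum ⊤ (graphSum ⊤ (graphSum ⊤ ⊤)))

/-! `D + I` is constant on the blocks of the partition hub / `K_{n₁}` / `K_{n₂}`, since the hub
is adjacent to everything and two vertices in different cliques are at distance `2`. Such a
block-constant matrix factors as `P Q Pᵀ` through the `n × 3` block-indicator matrix `P`, so
`charpoly (P (Q Pᵀ)) = X ^ (n - 3) * charpoly (Q Pᵀ P)` reduces everything to the `3 × 3`
quotient matrix `Q · diag(1, n₁, n₂)`, whose characteristic polynomial at `λ + 1` is `f(λ)`. -/

open Polynomial Finset
open scoped Matrix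

section BlockConstant

variable {V k : Type*} (R : Type*) [DecidableEq k] [CommRing R]

def partitionMatrix (π : V → k) : Matrix V k R :=
  Matrix.of fun v j => if π v = j then 1 else 0

theorem partitionMatrix_mul_mul_transpose [Fintype k] (π : V → k) (Q : Matrix k k R) :
    partitionMatrix R π * Q * (partitionMatrix R π)ᵀ = Q.submatrix π π := by
  ext u v
  simp [partitionMatrix, Matrix.mul_apply]

theorem transpose_partitionMatrix_mul_self [Fintype V] (π : V → k) :
    (partitionMatrix R π)ᵀ * partitionMatrix R π =
      Matrix.diagonal fun j => (#{v | π v = j} : R) := by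
  ext i j
  rcases eq_or_ne i j with rfl | hij
  · simp [partitionMatrix, Matrix.mul_apply, ← ite_and, Finset.sum_boole]
  · simp +contextual [partitionMatrix, Matrix.mul_apply, hij, Ne.symm hij]

variable {R}

theorem charpoly_submatrix_self [Fintype V] [DecidableEq V] [Fintype k] (π : V → k)
    (Q : Matrix k k R) (hk : Fintype.card k ≤ Fintype.card V) :
    (Q.submatrix π π).charpoly =
      X ^ (Fintype.card V - Fintype.card k) *
        (Q * Matrix.diagonal fun j => (#{v | π v = j} : R)).charpoly := by
  rw [← partitionMatrix_mul_mul_transpose, Matrix.mul_assoc,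
    Matrix.charpoly_mul_comm_of_le _ _ hk, Matrix.mul_assoc, transpose_partitionMatrix_mul_self]

end BlockConstant

namespace SimpleGraph

variable {V : Type*} {G : SimpleGraph V}

theorem dist_eq_two_of_adj_of_adj {u v w : V} (huv : u ≠ v) (hn : ¬G.Adj u v)
    (huw : G.Adj u w) (hwv : G.Adj w v) : G.dist u v = 2 := by
  rw [dist, edist_eq_two_iff.2 ⟨huv, hn, w, huw, hwv.symm⟩]
  rfl

theorem dist_eq_ite_of_forall_adj [DecidableEq V] [DecidableRel G.Adj] {w : V}
    (hw : ∀ v, v ≠ w → G.Adj w v) (u v : V) :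
    G.dist u v = if u = v then 0 else if G.Adj u v then 1 else 2 := by
  by_cases huv : u = v
  · simp [huv]
  by_cases hadj : G.Adj u v
  · simp [huv, hadj, dist_eq_one_iff_adj.2 hadj]
  have hu : u ≠ w := by rintro rfl; exact hadj (hw v (Ne.symm huv))
  have hv : v ≠ w := by rintro rfl; exact hadj (hw u huv).symm
  simp only [huv, hadj, if_false]
  exact dist_eq_two_of_adj_of_adj huv hadj (hw u hu).symm (hw v hv)

end SimpleGraph

def joinCliques2Block (n₁ n₂ : ℕ) : Fin 1 ⊕ (Fin n₁ ⊕ Fin n₂) → Fin 3 :=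
  Sum.elim (fun _ => 0) (Sum.elim (fun _ => 1) fun _ => 2)

theorem distMatrix_joinCliques2_add_one (n₁ n₂ : ℕ) :
    distMatrix (joinCliques2 n₁ n₂) + 1 =
      (!![1, 1, 1; 1, 1, 2; 1, 2, 1] : Matrix (Fin 3) (Fin 3) ℝ).submatrix
        (joinCliques2Block n₁ n₂) (joinCliques2Block n₁ n₂) := by
  classical
  have hub : ∀ v, v ≠ Sum.inl 0 → (joinCliques2 n₁ n₂).Adj (Sum.inl 0) v := by
    rintro (a | v) hv
    · exact absurd (congrArg Sum.inl (Subsingleton.elim a 0)) hv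
    · trivial
  ext u v
  rw [Matrix.add_apply, distMatrix, Matrix.of_apply, SimpleGraph.dist_eq_ite_of_forall_adj hub]
  rcases u with a | a | a <;> rcases v with b | b | b <;>
    simp [joinCliques2Block, Matrix.one_apply, joinCliques2, graphJoin, graphSum] <;>
    split_ifs <;> norm_num

theorem card_joinCliques2Block_fiber (n₁ n₂ : ℕ) (R : Type*) [Semiring R] :
    (fun j => (#{v | joinCliques2Block n₁ n₂ v = j} : R)) = ![1, (n₁ : R), (n₂ : R)] := by
  ext j
  fin_cases j <;>
    simp only [Finset.card_filter, Fintype.sum_sum_type] <;> simp [joinCliques2Block]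

theorem det_scalar_sub_joinCliques2Quotient {R : Type*} [CommRing R] (n₁ n₂ : ℕ) (c : R) :
    (Matrix.scalar (Fin 3) c -
        !![1, 1, 1; 1, 1, 2; 1, 2, 1] * Matrix.diagonal ![1, (n₁ : R), (n₂ : R)]).det =
      c ^ 3 - (1 + n₁ + n₂) * c ^ 2 - 3 * n₁ * n₂ * c + n₁ * n₂ := by
  rw [Matrix.det_fin_three]
  simp [Matrix.vecMul_diagonal]
  ring

theorem charpoly_joinCliques2 (n₁ n₂ : ℕ) (h₁ : 1 ≤ n₁) (h₂ : 1 ≤ n₂) (lam : ℝ) :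
    (lam • (1 : Matrix (Fin 1 ⊕ (Fin n₁ ⊕ Fin n₂)) (Fin 1 ⊕ (Fin n₁ ⊕ Fin n₂)) ℝ)
        - distMatrix (joinCliques2 n₁ n₂)).det =
      (lam + 1) ^ (n₁ + n₂ - 2) *
        (lam ^ 3 - ((n₁ : ℝ) + n₂ - 2) * lam ^ 2
          - (3 * (n₁ : ℝ) * n₂ + 2 * n₁ + 2 * n₂ - 1) * lam
          - 2 * (n₁ : ℝ) * n₂ - n₁ - n₂) := by
  have hshift : lam • 1 - distMatrix (joinCliques2 n₁ n₂) =
      Matrix.scalar _ (lam + 1) - (distMatrix (joinCliques2 n₁ n₂) + 1) := by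
    rw [Matrix.scalar_apply, ← Matrix.smul_one_eq_diagonal, add_smul, one_smul]
    abel
  have hcard : Fintype.card (Fin 1 ⊕ (Fin n₁ ⊕ Fin n₂)) = n₁ + n₂ + 1 := by
    simp only [Fintype.card_sum, Fintype.card_fin]
    ring
  rw [hshift, ← Matrix.eval_charpoly, distMatrix_joinCliques2_add_one,
    charpoly_submatrix_self _ _ (by simp only [hcard, Fintype.card_fin]; omega),
    card_joinCliques2Block_fiber, eval_mul, eval_pow, eval_X, Matrix.eval_charpoly,
    det_scalar_sub_joinCliques2Quotient, hcard, Fintype.card_fin,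
    show n₁ + n₂ + 1 - 3 = n₁ + n₂ - 2 by omega]
  ring
end

section
/- Let G be a connected graph on n ≥ 2 vertices. Then λ₂(G) ≤ −1 if and only if G is the complete graph K_n; in that case λ₂(G) = −1. -/
/-!
The distance matrix of `K_n` is `J - I`, so its quadratic form is `x ↦ (∑ xᵢ)² - ‖x‖²`: it is
at least `-‖x‖²` everywhere and equals `-‖x‖²` on the hyperplane `∑ xᵢ = 0`. By the min-max
principle every eigenvalue is `≥ -1` and the second largest is `≤ -1`.

A connected graph that is not complete contains vertices `u ~ v ~ w` with `d = d(u, w) ≥ 2`.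
On the plane spanned by `e_u + e_w` and `e_v` the form `xᵀDx + ‖x‖²` equals
`(2d - 2)a² + (2a + b)²` at `a(e_u + e_w) + b e_v`, which is positive definite, so `D` has two
eigenvalues larger than `-1`.
-/

open scoped RealInnerProductSpace

theorem exists_smul_add_smul_inner_eq_zero {E : Type*} [NormedAddCommGroup E]
    [InnerProductSpace ℝ E] (v x y : E) :
    ∃ a b : ℝ, (a ≠ 0 ∨ b ≠ 0) ∧ ⟪v, a • x + b • y⟫ = 0 := by
  by_cases hx : ⟪v, x⟫ = 0
  · exact ⟨1, 0, .inl one_ne_zero, by simp [hx]⟩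
  · refine ⟨⟪v, y⟫, -⟪v, x⟫, .inr (neg_ne_zero.mpr hx), ?_⟩
    simp only [inner_add_right, real_inner_smul_right]
    ring

namespace LinearMap.IsSymmetric

variable {E : Type*} [NormedAddCommGroup E] [InnerProductSpace ℝ E] [FiniteDimensional ℝ E]
  {T : E →ₗ[ℝ] E} {n : ℕ} (hT : T.IsSymmetric) (hn : Module.finrank ℝ E = n)

include hT in
theorem inner_apply_self_eq_sum (x : E) :
    ⟪T x, x⟫ = ∑ i, hT.eigenvalues hn i * ⟪hT.eigenvectorBasis hn i, x⟫ ^ 2 := by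
  rw [← (hT.eigenvectorBasis hn).sum_inner_mul_inner]
  refine Finset.sum_congr rfl fun i _ => ?_
  rw [hT, apply_eigenvectorBasis, real_inner_comm x]
  simp only [RCLike.ofReal_real_eq_id, id_eq, real_inner_smul_right]
  ring

theorem le_eigenvalues {c : ℝ} (h : ∀ x, c * ‖x‖ ^ 2 ≤ ⟪T x, x⟫) (i : Fin n) :
    c ≤ hT.eigenvalues hn i := by
  simpa [apply_eigenvectorBasis, real_inner_smul_left,
    (hT.eigenvectorBasis hn).orthonormal.1 i] using h (hT.eigenvectorBasis hn i)

theorem inner_apply_self_le_of_inner_eigenvectorBasis_eq_zero {c : ℝ} {i₀ : Fin n}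
    (h : ∀ i ≠ i₀, hT.eigenvalues hn i ≤ c) {x : E}
    (hx : ⟪hT.eigenvectorBasis hn i₀, x⟫ = 0) : ⟪T x, x⟫ ≤ c * ‖x‖ ^ 2 := by
  rw [hT.inner_apply_self_eq_sum hn, ← (hT.eigenvectorBasis hn).sum_sq_inner_right,
    Finset.mul_sum]
  refine Finset.sum_le_sum fun i _ => ?_
  rcases eq_or_ne i i₀ with rfl | hi
  · simp [hx]
  · exact mul_le_mul_of_nonneg_right (h i hi) (sq_nonneg _)

/- The two halves of the min-max principle for the second largest eigenvalue, which sits at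
index `1` since `eigenvalues` is sorted in decreasing order. -/

theorem eigenvalues_one_le {c : ℝ} (h1 : 1 < n) (v : E)
    (h : ∀ x, ⟪v, x⟫ = 0 → ⟪T x, x⟫ ≤ c * ‖x‖ ^ 2) : hT.eigenvalues hn ⟨1, h1⟩ ≤ c := by
  by_contra! hlt
  let i₀ : Fin n := ⟨0, by omega⟩
  let i₁ : Fin n := ⟨1, h1⟩
  have hμ : hT.eigenvalues hn i₁ ≤ hT.eigenvalues hn i₀ :=
    hT.eigenvalues_antitone hn (Fin.mk_le_mk.mpr (Nat.zero_le 1))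
  obtain ⟨s, t, hst, hv⟩ :=
    exists_smul_add_smul_inner_eq_zero v (hT.eigenvectorBasis hn i₀) (hT.eigenvectorBasis hn i₁)
  have hquad : s * (s * hT.eigenvalues hn i₀) + t * (t * hT.eigenvalues hn i₁) ≤
      c * (s * s + t * t) := by
    have := h _ hv
    rw [← real_inner_self_eq_norm_sq] at this
    simp only [map_add, map_smul, apply_eigenvectorBasis, inner_add_left, inner_add_right,
      real_inner_smul_left, real_inner_smul_right, RCLike.ofReal_real_eq_id, id_eq,
      orthonormal_iff_ite.mp (hT.eigenvectorBasis hn).orthonormal] at this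
    simpa [i₀, i₁] using this
  have hpos : 0 < s ^ 2 + t ^ 2 := by rcases hst with hs | ht <;> positivity
  nlinarith

theorem lt_eigenvalues_one {c : ℝ} (h1 : 1 < n) (x y : E)
    (h : ∀ a b : ℝ, a ≠ 0 ∨ b ≠ 0 →
      c * ‖a • x + b • y‖ ^ 2 < ⟪T (a • x + b • y), a • x + b • y⟫) :
    c < hT.eigenvalues hn ⟨1, h1⟩ := by
  by_contra! hle
  have hrest : ∀ i ≠ ⟨0, by omega⟩, hT.eigenvalues hn i ≤ c := fun i hi =>
    (hT.eigenvalues_antitone hn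
      (Fin.mk_le_of_le_val (by simp [Fin.ext_iff] at hi; omega))).trans hle
  obtain ⟨a, b, hab, hz⟩ :=
    exists_smul_add_smul_inner_eq_zero (hT.eigenvectorBasis hn ⟨0, by omega⟩) x y
  exact (h a b hab).not_ge
    (hT.inner_apply_self_le_of_inner_eigenvectorBasis_eq_zero hn hrest hz)

end LinearMap.IsSymmetric

theorem Matrix.IsHermitian.sort_map_eigenvalues {n : Type*} [Fintype n] [DecidableEq n]
    {A : Matrix n n ℝ} (hA : A.IsHermitian) :
    (Finset.univ.val.map hA.eigenvalues).sort (· ≤ ·) = (List.ofFn hA.eigenvalues₀).reverse := by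
  refine List.Perm.eq_reverse_of_sortedLE_of_sortedGE ?_
    (Multiset.pairwise_sort _ _).sortedLE hA.eigenvalues₀_antitone.sortedGE_ofFn
  rw [← Multiset.coe_eq_coe, Multiset.sort_eq, ← Fin.univ_val_map,
    ← Multiset.map_univ_val_equiv (Fintype.equivOfCardEq (Fintype.card_fin _)).symm,
    Multiset.map_map]
  rfl

theorem Matrix.inner_toEuclideanLin_single {n : Type*} [Fintype n] [DecidableEq n]
    (A : Matrix n n ℝ) (i j : n) :
    ⟪Matrix.toEuclideanLin A (EuclideanSpace.single i 1), EuclideanSpace.single j 1⟫ = A j i := by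
  simp [EuclideanSpace.inner_single_right, Matrix.toLpLin_apply]

theorem SimpleGraph.Connected.exists_adj_adj_one_lt_dist {V : Type*} {G : SimpleGraph V}
    (hconn : G.Connected) (hG : G ≠ ⊤) : ∃ u v w, G.Adj u v ∧ G.Adj v w ∧ 1 < G.dist u w := by
  obtain ⟨x, y, hxy, hnadj⟩ : ∃ x y, x ≠ y ∧ ¬G.Adj x y := by
    by_contra! h
    exact hG (SimpleGraph.ext (funext₂ fun x y => propext ⟨SimpleGraph.Adj.ne, h x y⟩))
  obtain ⟨p, hp⟩ := (hconn x y).exists_path_of_dist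
  obtain ⟨u, v, w, huv, hvw, hnuw, huw⟩ :=
    p.exists_adj_adj_not_adj_ne hp.2 ((hconn x y).one_lt_dist_of_ne_of_not_adj hxy hnadj)
  exact ⟨u, v, w, huv, hvw, (hconn u w).one_lt_dist_of_ne_of_not_adj huw hnuw⟩

section DistanceMatrix

open SimpleGraph

variable {V : Type*} [Fintype V]

theorem distMatrix_apply (G : SimpleGraph V) (u v : V) : distMatrix G u v = G.dist u v := rfl

variable [DecidableEq V]

theorem distEig_succ_eq_eigenvalues₀ (G : SimpleGraph V) {k : ℕ} (hk : k < Fintype.card V) :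
    distEig G (k + 1) = (distMatrix_isHermitian G).eigenvalues₀ ⟨k, hk⟩ := by
  rw [distEig, distEigMultiset, Matrix.IsHermitian.sort_map_eigenvalues, List.reverse_reverse]
  simp [hk]

theorem inner_toEuclideanLin_distMatrix_top (x : EuclideanSpace ℝ V) :
    ⟪Matrix.toEuclideanLin (distMatrix (⊤ : SimpleGraph V)) x, x⟫ = (∑ i, x i) ^ 2 - ‖x‖ ^ 2 := by
  have hD : distMatrix (⊤ : SimpleGraph V) = Matrix.of (fun _ _ => 1) - 1 := by
    ext u v
    rcases eq_or_ne u v with rfl | h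
    · simp [distMatrix_apply]
    · simp [distMatrix_apply, h, dist_eq_one_iff_adj.mpr ((top_adj u v).mpr h)]
  calc ⟪Matrix.toEuclideanLin (distMatrix ⊤) x, x⟫ = ∑ j, x j * (∑ i, x i - x j) := by
        simp [hD, PiLp.inner_apply, Matrix.toLpLin_apply, dotProduct, Matrix.mulVec]
    _ = (∑ i, x i) ^ 2 - ‖x‖ ^ 2 := by
        rw [EuclideanSpace.real_norm_sq_eq]
        simp only [mul_sub, Finset.sum_sub_distrib, ← Finset.sum_mul, sq]

theorem neg_norm_sq_lt_inner_toEuclideanLin_distMatrix {G : SimpleGraph V} {u v w : V}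
    (huv : G.Adj u v) (hvw : G.Adj v w) (huw : 1 < G.dist u w) {a b : ℝ} (hab : a ≠ 0 ∨ b ≠ 0)
    {z : EuclideanSpace ℝ V}
    (hz : z = a • (EuclideanSpace.single u 1 + EuclideanSpace.single w 1) +
      b • EuclideanSpace.single v 1) :
    -1 * ‖z‖ ^ 2 < ⟪Matrix.toEuclideanLin (distMatrix G) z, z⟫ := by
  have huw' : u ≠ w := by rintro rfl; simp at huw
  have hnorm : ‖z‖ ^ 2 = 2 * a ^ 2 + b ^ 2 := by
    rw [← real_inner_self_eq_norm_sq, hz]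
    simp only [inner_add_left, inner_add_right, real_inner_smul_left, real_inner_smul_right,
      EuclideanSpace.inner_single_left]
    simp only [Real.ringHom_apply, PiLp.single_eq_same, PiLp.single_eq_of_ne, PiLp.single_eq_of_ne',
      huv.ne, hvw.ne.symm, huw', huw'.symm, ne_eq, not_false_eq_true, mul_one, mul_zero,
      add_zero, zero_add]
    ring
  have hquad : ⟪Matrix.toEuclideanLin (distMatrix G) z, z⟫ =
      2 * G.dist u w * a ^ 2 + 4 * a * b := by
    rw [hz]
    simp only [map_add, map_smul, inner_add_left, inner_add_right, real_inner_smul_left,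
      real_inner_smul_right, Matrix.inner_toEuclideanLin_single, distMatrix_apply,
      dist_comm (u := w) (v := u), dist_comm (u := v) (v := u), dist_comm (u := w) (v := v),
      dist_eq_one_iff_adj.mpr huv, dist_eq_one_iff_adj.mpr hvw, dist_self]
    push_cast
    ring
  have hd : (2 : ℝ) ≤ G.dist u w := by exact_mod_cast huw
  rw [hnorm, hquad]
  rcases eq_or_ne a 0 with rfl | ha
  · nlinarith [sq_pos_of_ne_zero (hab.resolve_left (not_not.2 rfl))]
  · nlinarith [sq_pos_of_ne_zero ha, sq_nonneg (2 * a + b),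
      mul_nonneg (sub_nonneg.2 hd) (sq_nonneg a)]

theorem distEig_top_two (hcard : 2 ≤ Fintype.card V) : distEig (⊤ : SimpleGraph V) 2 = -1 := by
  have hT :=
    Matrix.isSymmetric_toEuclideanLin_iff.mpr (distMatrix_isHermitian (⊤ : SimpleGraph V))
  rw [distEig_succ_eq_eigenvalues₀ _ hcard]
  refine le_antisymm (hT.eigenvalues_one_le finrank_euclideanSpace hcard
    (WithLp.toLp 2 fun _ => 1) fun x hx => ?_) (hT.le_eigenvalues _ (fun x => ?_) _)
  · have hsum : ∑ i, x i = 0 := by simpa [PiLp.inner_apply] using hx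
    rw [inner_toEuclideanLin_distMatrix_top, hsum]
    norm_num
  · rw [inner_toEuclideanLin_distMatrix_top]
    nlinarith [sq_nonneg (∑ i, x i)]

theorem neg_one_lt_distEig_two {G : SimpleGraph V} (hconn : G.Connected) (hG : G ≠ ⊤)
    (hcard : 2 ≤ Fintype.card V) : -1 < distEig G 2 := by
  have hT := Matrix.isSymmetric_toEuclideanLin_iff.mpr (distMatrix_isHermitian G)
  obtain ⟨u, v, w, huv, hvw, huw⟩ := hconn.exists_adj_adj_one_lt_dist hG
  rw [distEig_succ_eq_eigenvalues₀ _ hcard]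
  exact hT.lt_eigenvalues_one finrank_euclideanSpace hcard _ _
    fun a b hab => neg_norm_sq_lt_inner_toEuclideanLin_distMatrix huv hvw huw hab rfl

end DistanceMatrix

theorem secondDistEig_le_neg_one_iff_complete {V : Type*} [Fintype V] [DecidableEq V]
    (G : SimpleGraph V) (hconn : G.Connected) (hcard : 2 ≤ Fintype.card V) :
    (distEig G 2 ≤ -1 ↔ G = ⊤) ∧ (G = ⊤ → distEig G 2 = -1) := by
  have hK : G = ⊤ → distEig G 2 = -1 := by
    rintro rfl
    exact distEig_top_two hcard
  refine ⟨⟨fun h => ?_, fun h => (hK h).le⟩, hK⟩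
  by_contra hG
  linarith [neg_one_lt_distEig_two hconn hG hcard]
end

section
/- If G is a connected graph that is not complete, then λ₂(G) ≥ 1 − √3. -/
/-!
A connected graph that is not complete contains an induced path `u - w - v`, so `d(u, v) = 2`.
For `x = p (e_u + e_v) + q e_w` the distance matrix gives `xᵀ D x = 4p² + 4pq` while
`xᵀ x = 2p² + q²`, and the least ratio of the two is `1 - √3`, the second distance eigenvalue of
the path on three vertices. By the min-max principle, a two-dimensional subspace on which the
Rayleigh quotient is at least `c` forces two eigenvalues `≥ c`.
-/

open Finset Matrix Module WithLp
open scoped RealInnerProductSpace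

namespace SimpleGraph

variable {V : Type*} {G : SimpleGraph V}

theorem Connected.exists_adj_adj_not_adj_of_ne_top (hG : G.Connected) (hne : G ≠ ⊤) :
    ∃ u w v, G.Adj u w ∧ G.Adj w v ∧ ¬G.Adj u v ∧ u ≠ v := by
  obtain ⟨u, v, huv, hnadj⟩ : ∃ u v, u ≠ v ∧ ¬G.Adj u v := by
    by_contra! h
    exact hne (by ext u v; exact ⟨G.ne_of_adj, h u v⟩)
  obtain ⟨p⟩ := hG.preconnected u v
  -- a path from `u` must leave the closed neighbourhood of `u` before reaching `v`
  obtain ⟨d, -, hfst, hsnd⟩ := p.exists_boundary_dart {x | x = u ∨ G.Adj u x} (Or.inl rfl)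
    (by simp [huv.symm, hnadj])
  simp only [Set.mem_ofPred_eq, not_or] at hfst hsnd
  rcases hfst with hu | hadj
  · exact absurd (hu ▸ d.adj) hsnd.2
  · exact ⟨u, d.fst, d.snd, hadj, d.adj, hsnd.2, Ne.symm hsnd.1⟩

theorem dist_eq_two_of_adj_adj {u w v : V} (huw : G.Adj u w) (hwv : G.Adj w v)
    (hnuv : ¬G.Adj u v) (huv : u ≠ v) : G.dist u v = 2 := by
  have hw : w ∈ G.commonNeighbors u v := G.mem_commonNeighbors.2 ⟨huw, hwv.symm⟩
  simp [SimpleGraph.dist, edist_eq_two_iff.2 ⟨huv, hnuv, ⟨w, hw⟩⟩]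

end SimpleGraph

section Spectral

variable {ι E : Type*} [Fintype ι] [NormedAddCommGroup E] [InnerProductSpace ℝ E]
  (b : OrthonormalBasis ι ℝ E) {T : E →ₗ[ℝ] E} {μ : ι → ℝ}

theorem OrthonormalBasis.inner_map_self_eq_sum (hT : ∀ i, T (b i) = μ i • b i) (x : E) :
    ⟪T x, x⟫ = ∑ i, μ i * b.repr x i ^ 2 := by
  nth_rewrite 1 [← b.sum_repr x]
  simp only [map_sum, map_smul, hT, smul_smul, sum_inner, real_inner_smul_left,
    ← b.repr_apply_apply]
  exact Finset.sum_congr rfl fun i _ => by ring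

theorem OrthonormalBasis.finrank_le_card_le_of_le_inner (hT : ∀ i, T (b i) = μ i • b i)
    (c : ℝ) (W : Submodule ℝ E) (hW : ∀ x ∈ W, c * ⟪x, x⟫ ≤ ⟪T x, x⟫) :
    finrank ℝ W ≤ #{i | c ≤ μ i} := by
  classical
  let f : W →ₗ[ℝ] ({i // c ≤ μ i} → ℝ) := LinearMap.pi fun i => b.toBasis.coord i ∘ₗ W.subtype
  have hf : Function.Injective f := by
    refine (injective_iff_map_eq_zero f).2 fun x hx => ?_
    have hbig : ∀ i, c ≤ μ i → b.repr x i = 0 := fun i hi => by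
      simpa [f] using congrFun hx ⟨i, hi⟩
    have hterm : ∀ i ∈ univ, 0 ≤ (c - μ i) * b.repr x i ^ 2 := fun i _ => by
      rcases le_or_gt c (μ i) with hi | hi
      · simp [hbig i hi]
      · exact mul_nonneg (sub_nonneg.2 hi.le) (sq_nonneg _)
    have hsum : ∑ i, (c - μ i) * b.repr x i ^ 2 = 0 := by
      refine le_antisymm ?_ (sum_nonneg hterm)
      have hx := hW x x.2
      have hxx : ⟪(x : E), x⟫ = ∑ i, b.repr x i ^ 2 := by
        simpa using b.inner_map_self_eq_sum (T := LinearMap.id) (μ := 1) (by simp) x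
      rw [b.inner_map_self_eq_sum hT, hxx] at hx
      simp only [sub_mul, sum_sub_distrib, mul_sum] at hx ⊢
      linarith
    have hzero : ∀ i, b.repr x i = 0 := fun i => by
      rcases le_or_gt c (μ i) with hi | hi
      · exact hbig i hi
      · have := (sum_eq_zero_iff_of_nonneg hterm).1 hsum i (mem_univ i)
        simpa [(sub_pos.2 hi).ne'] using this
    exact Subtype.ext (b.repr.injective (by ext i; simp [hzero]))
  simpa [Fintype.card_subtype] using LinearMap.finrank_le_finrank_of_injective hf

end Spectral

theorem Matrix.IsHermitian.finrank_le_card_le_eigenvalues {n : Type*} [Fintype n] [DecidableEq n]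
    {A : Matrix n n ℝ} (hA : A.IsHermitian) (c : ℝ) (W : Submodule ℝ (n → ℝ))
    (hW : ∀ x ∈ W, c * (x ⬝ᵥ x) ≤ x ⬝ᵥ (A *ᵥ x)) :
    finrank ℝ W ≤ #{i | c ≤ hA.eigenvalues i} := by
  let e := (WithLp.linearEquiv 2 ℝ (n → ℝ)).symm
  rw [← e.finrank_map_eq W]
  refine hA.eigenvectorBasis.finrank_le_card_le_of_le_inner (T := toLpLin 2 2 A)
    (fun i => WithLp.ofLp_injective 2 (by simpa using hA.mulVec_eigenvectorBasis i)) c _ ?_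
  rintro _ ⟨x, hx, rfl⟩
  show c * ⟪toLp 2 x, toLp 2 x⟫ ≤ ⟪toLpLin 2 2 A (toLp 2 x), toLp 2 x⟫
  simpa only [toLpLin_toLp, EuclideanSpace.inner_toLp_toLp, star_trivial, toLin'_apply,
    dotProduct_comm x] using hW x hx

theorem List.le_getD_of_lt_countP {α : Type*} [LinearOrder α] {l : List α}
    (hl : l.Pairwise (· ≥ ·)) {c : α} {k : ℕ} (d : α) (hk : k < l.countP (c ≤ ·)) :
    c ≤ l.getD k d := by
  induction l generalizing k with
  | nil => simp at hk
  | cons x xs ih =>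
    cases k with
    | zero =>
      obtain ⟨a, ha, hca⟩ := List.countP_pos_iff.1 hk
      rcases List.mem_cons.1 ha with rfl | ha
      · simpa using hca
      · simpa using (of_decide_eq_true hca).trans (List.rel_of_pairwise_cons hl ha)
    | succ k =>
      rw [List.countP_cons] at hk
      exact ih hl.of_cons (by split at hk <;> omega)

theorem Multiset.le_getD_reverse_sort_of_lt_countP {α : Type*} [LinearOrder α] (M : Multiset α)
    {c : α} {k : ℕ} (d : α) (hk : k < M.countP (c ≤ ·)) :
    c ≤ (M.sort (· ≤ ·)).reverse.getD k d := by
  refine List.le_getD_of_lt_countP (List.pairwise_reverse.2 (M.pairwise_sort _)) d ?_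
  rwa [List.countP_reverse, ← Multiset.coe_countP, M.sort_eq]

theorem le_distEig_of_le_card {V : Type*} [Fintype V] [DecidableEq V] (G : SimpleGraph V)
    {c : ℝ} {k : ℕ} (hk : 0 < k)
    (hcard : k ≤ #{i | c ≤ (distMatrix_isHermitian G).eigenvalues i}) :
    c ≤ distEig G k := by
  refine Multiset.le_getD_reverse_sort_of_lt_countP _ 0 ?_
  rw [distEigMultiset, Multiset.countP_map]
  exact lt_of_lt_of_le (by omega) hcard

theorem one_sub_sqrt_three_mul_le (p q : ℝ) :
    (1 - √3) * (2 * p ^ 2 + q ^ 2) ≤ 4 * p ^ 2 + 4 * p * q := by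
  have h3 : √3 ^ 2 = 3 := Real.sq_sqrt (by norm_num)
  -- the difference is `(√3 - 1) * ((1 + √3) * p + q) ^ 2`
  nlinarith [sq_nonneg ((1 + √3) * p + q), Real.sqrt_nonneg 3]

theorem SimpleGraph.two_le_card_one_sub_sqrt_three_le_distEigenvalues {V : Type*} [Fintype V]
    [DecidableEq V] {G : SimpleGraph V} {u w v : V} (huw : G.Adj u w) (hwv : G.Adj w v)
    (hnuv : ¬G.Adj u v) (huv : u ≠ v) :
    2 ≤ #{i | 1 - √3 ≤ (distMatrix_isHermitian G).eigenvalues i} := by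
  have hd_uw := dist_eq_one_iff_adj.2 huw
  have hd_wu := dist_eq_one_iff_adj.2 huw.symm
  have hd_wv := dist_eq_one_iff_adj.2 hwv
  have hd_vw := dist_eq_one_iff_adj.2 hwv.symm
  have hd_uv := dist_eq_two_of_adj_adj huw hwv hnuv huv
  have hd_vu := dist_eq_two_of_adj_adj hwv.symm huw.symm (fun h => hnuv h.symm) huv.symm
  have huw' := G.ne_of_adj huw
  have hwv' := G.ne_of_adj hwv
  set y : V → ℝ := Pi.single u 1 + Pi.single v 1
  set z : V → ℝ := Pi.single w 1
  have hyz : LinearIndependent ℝ ![y, z] := LinearIndependent.pair_iff.2 fun p q h =>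
    ⟨by simpa [y, z, huv, huw'] using congrFun h u, by simpa [y, z, huw', hwv'] using congrFun h w⟩
  refine (finrank_span_eq_card hyz).symm.trans_le
    ((distMatrix_isHermitian G).finrank_le_card_le_eigenvalues _ _ fun x hx => ?_)
  rw [range_cons_cons_empty] at hx
  obtain ⟨p, q, rfl⟩ := Submodule.mem_span_pair.1 hx
  have hnorm : (p • y + q • z) ⬝ᵥ (p • y + q • z) = 2 * p ^ 2 + q ^ 2 := by
    simp only [y, z, smul_add, dotProduct_add, dotProduct_smul, dotProduct_single, Pi.add_apply,
      Pi.smul_apply, Pi.single_eq_same, Pi.single_eq_of_ne, huv, huw', hwv', huv.symm, huw'.symm,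
      hwv'.symm, ne_eq, not_false_eq_true, smul_eq_mul, mul_one, mul_zero, add_zero, zero_add]
    ring
  have hform : (p • y + q • z) ⬝ᵥ (distMatrix G *ᵥ (p • y + q • z)) = 4 * p ^ 2 + 4 * p * q := by
    simp only [y, z, distMatrix, smul_add, mulVec_add, mulVec_smul, mulVec_single,
      MulOpposite.op_one, one_smul, dotProduct_add, dotProduct_smul, add_dotProduct,
      smul_dotProduct, single_dotProduct, col_apply, of_apply, dist_self, hd_uw, hd_wu, hd_wv,
      hd_vw, hd_uv, hd_vu, CharP.cast_eq_zero, Nat.cast_ofNat, Nat.cast_one, smul_eq_mul,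
      one_mul, mul_one, mul_zero, zero_add, add_zero]
    ring
  rw [hnorm, hform]
  exact one_sub_sqrt_three_mul_le p q

theorem secondDistEig_ge_of_not_complete {V : Type*} [Fintype V] [DecidableEq V]
    (G : SimpleGraph V) (hconn : G.Connected) (hnc : G ≠ ⊤) :
    1 - Real.sqrt 3 ≤ distEig G 2 := by
  obtain ⟨u, w, v, huw, hwv, hnuv, huv⟩ := hconn.exists_adj_adj_not_adj_of_ne_top hnc
  exact le_distEig_of_le_card G two_pos
    (G.two_le_card_one_sub_sqrt_three_le_distEigenvalues huw hwv hnuv huv)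
end

section
/- For every integer n₄ ≥ 2, the second distance eigenvalue of the graph K₁∨(K₁∪K₂∪K₂∪K_{n₄}) lies in the open interval (−1, −0.5858). -/
/-!
In `K₁ ∨ (K₁ ∪ K₂ ∪ K₂ ∪ K_m)` any two vertices are at distance 1 or 2, the apex being a common
neighbour, so the distance matrix is `C[part u, part v] - I` for a fixed `5 × 5` matrix `C` and its
quadratic form is `p ⬝ C p - ‖x‖²`, where `p` lists the sums of `x` over the five parts.

A symmetric matrix whose form exceeds `c ‖x‖²` on a plane has two eigenvalues `> c`, and one
whose form is below `c ‖x‖²` on a hyperplane has at most one eigenvalue `≥ c`. On the plane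
spanned by `𝟙` and the apex indicator, `p ⬝ C p > 0`, whence `λ₂ > -1`. On a suitable hyperplane
`p ⬝ w = 0`, a sum-of-squares certificate gives `p ⬝ C p ≤ 0.4137 (p₀² + p₁² + p₂²/2 + p₃²/2)`,
and by Cauchy–Schwarz in each part the right side is at most `0.4137 ‖x‖²`, whence `λ₂ < -0.5858`.
Neither bound depends on `m`.
-/

open Matrix Finset

lemma exists_ne_zero_mul_add_mul_eq_zero {R : Type*} [CommRing R] [Nontrivial R] (s t : R) :
    ∃ α β : R, (α ≠ 0 ∨ β ≠ 0) ∧ α * s + β * t = 0 := by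
  by_cases hs : s = 0
  · exact ⟨1, 0, by simp, by simp [hs]⟩
  · exact ⟨t, -s, Or.inr (neg_ne_zero.mpr hs), by ring⟩

namespace Matrix.IsHermitian
variable {V : Type*} [Fintype V] [DecidableEq V] {A : Matrix V V ℝ} (hA : A.IsHermitian)

lemma eigenvectorBasis_dotProduct (i j : V) :
    ⇑(hA.eigenvectorBasis i) ⬝ᵥ ⇑(hA.eigenvectorBasis j) = if i = j then 1 else 0 := by
  have := hA.eigenvectorBasis.orthonormal
  rw [orthonormal_iff_ite] at this
  simpa [EuclideanSpace.inner_eq_star_dotProduct, dotProduct_comm, eq_comm] using this i j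

lemma sum_eigenvectorBasis_dotProduct_smul (x : V → ℝ) :
    ∑ i, (⇑(hA.eigenvectorBasis i) ⬝ᵥ x) • ⇑(hA.eigenvectorBasis i) = x := by
  have := congrArg WithLp.ofLp (hA.eigenvectorBasis.sum_repr' (WithLp.toLp 2 x))
  simpa [EuclideanSpace.inner_eq_star_dotProduct, dotProduct_comm] using this

lemma dotProduct_self_eq_sum (x : V → ℝ) :
    x ⬝ᵥ x = ∑ i, (⇑(hA.eigenvectorBasis i) ⬝ᵥ x) ^ 2 := by
  nth_rw 1 [← hA.sum_eigenvectorBasis_dotProduct_smul x]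
  simp [sum_dotProduct, smul_dotProduct, sq]

lemma dotProduct_mulVec_eq_sum (x : V → ℝ) :
    x ⬝ᵥ A *ᵥ x = ∑ i, hA.eigenvalues i * (⇑(hA.eigenvectorBasis i) ⬝ᵥ x) ^ 2 := by
  nth_rw 2 [← hA.sum_eigenvectorBasis_dotProduct_smul x]
  simp only [mulVec_sum, mulVec_smul, hA.mulVec_eigenvectorBasis, dotProduct_sum, dotProduct_smul]
  refine Finset.sum_congr rfl fun i _ => ?_
  rw [dotProduct_comm x, smul_eq_mul, smul_eq_mul]
  ring

lemma card_le_one_of_dotProduct_mulVec_lt {c : ℝ} {w : V → ℝ}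
    (h : ∀ x : V → ℝ, x ≠ 0 → x ⬝ᵥ w = 0 → x ⬝ᵥ A *ᵥ x < c * (x ⬝ᵥ x)) :
    #{i | c ≤ hA.eigenvalues i} ≤ 1 := by
  refine Finset.card_le_one.mpr fun i hi j hj => ?_
  by_contra hij
  simp only [Finset.mem_filter, Finset.mem_univ, true_and] at hi hj
  set b := fun k => ⇑(hA.eigenvectorBasis k)
  obtain ⟨α, β, hαβ, hw⟩ := exists_ne_zero_mul_add_mul_eq_zero (b i ⬝ᵥ w) (b j ⬝ᵥ w)
  set x := α • b i + β • b j
  have hAx : A *ᵥ x = (α * hA.eigenvalues i) • b i + (β * hA.eigenvalues j) • b j := by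
    simp [x, b, mulVec_add, mulVec_smul, hA.mulVec_eigenvectorBasis, smul_smul]
  have hxx : x ⬝ᵥ x = α ^ 2 + β ^ 2 := by
    simp only [x, b, dotProduct_add, add_dotProduct, dotProduct_smul, smul_dotProduct,
      hA.eigenvectorBasis_dotProduct, hij, Ne.symm hij, ↓reduceIte, smul_eq_mul]
    ring
  have hxAx : x ⬝ᵥ A *ᵥ x = hA.eigenvalues i * α ^ 2 + hA.eigenvalues j * β ^ 2 := by
    simp only [hAx, x, b, dotProduct_add, add_dotProduct, dotProduct_smul, smul_dotProduct,
      hA.eigenvectorBasis_dotProduct, hij, Ne.symm hij, ↓reduceIte, smul_eq_mul]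
    ring
  have hpos : 0 < α ^ 2 + β ^ 2 := by rcases hαβ with h | h <;> positivity
  have hx : x ≠ 0 := fun h0 => by simp [h0] at hxx; linarith
  have := h x hx (by simpa [x, add_dotProduct] using hw)
  rw [hxx, hxAx] at this
  nlinarith [sq_nonneg α, sq_nonneg β]

lemma two_le_card_of_lt_dotProduct_mulVec [Nonempty V] {c : ℝ} {u v : V → ℝ}
    (h : ∀ a b : ℝ, (a ≠ 0 ∨ b ≠ 0) →
      c * ((a • u + b • v) ⬝ᵥ (a • u + b • v)) < (a • u + b • v) ⬝ᵥ A *ᵥ (a • u + b • v)) :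
    2 ≤ #{i | c < hA.eigenvalues i} := by
  by_contra! hcard
  obtain ⟨i₀, hi₀⟩ := Finset.card_le_one_iff_subset_singleton.mp (Nat.le_of_lt_succ hcard)
  set b₀ := ⇑(hA.eigenvectorBasis i₀)
  obtain ⟨α, β, hαβ, hw⟩ := exists_ne_zero_mul_add_mul_eq_zero (b₀ ⬝ᵥ u) (b₀ ⬝ᵥ v)
  have hle : ∀ k, hA.eigenvalues k * (⇑(hA.eigenvectorBasis k) ⬝ᵥ (α • u + β • v)) ^ 2 ≤
      c * (⇑(hA.eigenvectorBasis k) ⬝ᵥ (α • u + β • v)) ^ 2 := by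
    intro k
    by_cases hk : k = i₀
    · subst hk; simp [b₀, dotProduct_add, hw]
    · refine mul_le_mul_of_nonneg_right (not_lt.mp fun hlt => hk ?_) (sq_nonneg _)
      simpa using hi₀ (Finset.mem_filter.mpr ⟨Finset.mem_univ k, hlt⟩)
  have := h α β hαβ
  rw [hA.dotProduct_mulVec_eq_sum, hA.dotProduct_self_eq_sum, Finset.mul_sum] at this
  exact not_lt.mpr (Finset.sum_le_sum fun k _ => hle k) this

end Matrix.IsHermitian

namespace Multiset
variable {α : Type*} [LinearOrder α] {M : Multiset α} {c d : α}

lemma exists_eq_cons_cons_of_two_le_card (hM : 2 ≤ card M) :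
    ∃ a t, M = a ::ₘ ((M.sort (· ≤ ·)).reverse.getD 1 d) ::ₘ t ∧
      (M.sort (· ≤ ·)).reverse.getD 1 d ≤ a ∧ ∀ x ∈ t, x ≤ (M.sort (· ≤ ·)).reverse.getD 1 d := by
  have hsorted : ((M.sort (· ≤ ·)).reverse).Pairwise (· ≥ ·) :=
    List.pairwise_reverse.mpr (pairwise_sort _ _)
  have hcoe : (((M.sort (· ≤ ·)).reverse : List α) : Multiset α) = M := by
    rw [coe_reverse, sort_eq]
  have hlen : ((M.sort (· ≤ ·)).reverse).length = card M := by simp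
  generalize (M.sort (· ≤ ·)).reverse = L at hsorted hcoe hlen
  obtain _ | ⟨a, _ | ⟨b, t⟩⟩ := L
  · simp at hlen; omega
  · simp at hlen; omega
  simp only [List.pairwise_cons, List.mem_cons, forall_eq_or_imp] at hsorted
  exact ⟨a, t, by simp [← hcoe], hsorted.1.1, hsorted.2.1⟩

lemma getD_one_sort_reverse_lt (hM : 2 ≤ card M) (hc : card (M.filter (c ≤ ·)) ≤ 1) :
    (M.sort (· ≤ ·)).reverse.getD 1 d < c := by
  obtain ⟨a, t, hMeq, hba, -⟩ := exists_eq_cons_cons_of_two_le_card (d := d) hM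
  set b := (M.sort (· ≤ ·)).reverse.getD 1 d
  by_contra! hb
  rw [hMeq, filter_cons_of_pos _ (hb.trans hba), filter_cons_of_pos _ hb] at hc
  simp at hc

lemma lt_getD_one_sort_reverse (hc : 2 ≤ card (M.filter (c < ·))) :
    c < (M.sort (· ≤ ·)).reverse.getD 1 d := by
  obtain ⟨a, t, hMeq, -, ht⟩ :=
    exists_eq_cons_cons_of_two_le_card (d := d) (hc.trans (card_le_card (filter_le _ M)))
  set b := (M.sort (· ≤ ·)).reverse.getD 1 d
  by_contra! hb
  rw [hMeq, filter_cons, filter_cons_of_neg _ (not_lt.mpr hb),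
    filter_eq_nil.mpr fun x hx => not_lt.mpr ((ht x hx).trans hb)] at hc
  split_ifs at hc <;> simp at hc

end Multiset

section distEig
variable {V : Type*} [Fintype V] [DecidableEq V] {G : SimpleGraph V} {c : ℝ}

lemma card_filter_distEigMultiset (G : SimpleGraph V) (P : ℝ → Prop) [DecidablePred P] :
    Multiset.card ((distEigMultiset G).filter P) =
      #{i | P ((distMatrix_isHermitian G).eigenvalues i)} := by
  rw [distEigMultiset, Multiset.filter_map, Multiset.card_map]
  rfl

lemma distEig_two_lt (hV : 2 ≤ Fintype.card V) {w : V → ℝ}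
    (h : ∀ x : V → ℝ, x ≠ 0 → x ⬝ᵥ w = 0 → x ⬝ᵥ distMatrix G *ᵥ x < c * (x ⬝ᵥ x)) :
    distEig G 2 < c :=
  Multiset.getD_one_sort_reverse_lt (by simpa [distEigMultiset] using hV)
    (by rw [card_filter_distEigMultiset]
        exact (distMatrix_isHermitian G).card_le_one_of_dotProduct_mulVec_lt h)

lemma lt_distEig_two [Nonempty V] {u v : V → ℝ}
    (h : ∀ a b : ℝ, (a ≠ 0 ∨ b ≠ 0) → c * ((a • u + b • v) ⬝ᵥ (a • u + b • v)) <
      (a • u + b • v) ⬝ᵥ distMatrix G *ᵥ (a • u + b • v)) :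
    c < distEig G 2 :=
  Multiset.lt_getD_one_sort_reverse
    (by rw [card_filter_distEigMultiset]
        exact (distMatrix_isHermitian G).two_le_card_of_lt_dotProduct_mulVec h)

end distEig

namespace SimpleGraph
variable {V : Type*} {G : SimpleGraph V}

lemma dist_eq_two_of_forall_adj {c : V} (hc : ∀ v, v ≠ c → G.Adj c v) {u v : V} (huv : u ≠ v)
    (hadj : ¬ G.Adj u v) : G.dist u v = 2 := by
  have huc : u ≠ c := by rintro rfl; exact hadj (hc v huv.symm)
  have hvc : v ≠ c := by rintro rfl; exact hadj (hc u huv).symm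
  have : G.edist u v = 2 := edist_eq_two_iff.mpr ⟨huv, hadj, c, (hc u huc).symm, (hc v hvc).symm⟩
  simp [dist, this]

end SimpleGraph

section partSum
variable {V ι : Type*} [Fintype V] [DecidableEq ι]

def partSum (pt : V → ι) (x : V → ℝ) (i : ι) : ℝ := ∑ u with pt u = i, x u

lemma partSum_comp (pt : V → ι) (f : ι → ℝ) (i : ι) :
    partSum pt (f ∘ pt) i = #{u | pt u = i} * f i := by
  simp only [partSum, Function.comp_apply]
  rw [Finset.sum_congr rfl fun u hu => congrArg f (Finset.mem_filter.mp hu).2]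
  simp

variable [Fintype ι]

lemma dotProduct_comp_eq_partSum_dotProduct (pt : V → ι) (x : V → ℝ) (f : ι → ℝ) :
    x ⬝ᵥ (f ∘ pt) = partSum pt x ⬝ᵥ f := by
  simp only [dotProduct, partSum, Finset.sum_mul, Function.comp_apply]
  rw [← Finset.sum_fiberwise Finset.univ pt]
  refine Finset.sum_congr rfl fun i _ => Finset.sum_congr rfl fun u hu => ?_
  rw [(Finset.mem_filter.mp hu).2]

lemma submatrix_mulVec_eq_comp (pt : V → ι) (C : Matrix ι ι ℝ) (x : V → ℝ) :
    C.submatrix pt pt *ᵥ x = (C *ᵥ partSum pt x) ∘ pt := by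
  ext u
  have := dotProduct_comp_eq_partSum_dotProduct pt x (C (pt u))
  rw [Function.comp_def] at this
  simpa [mulVec, dotProduct_comm] using this

lemma dotProduct_submatrix_mulVec (pt : V → ι) (C : Matrix ι ι ℝ) (x : V → ℝ) :
    x ⬝ᵥ C.submatrix pt pt *ᵥ x = partSum pt x ⬝ᵥ C *ᵥ partSum pt x := by
  rw [submatrix_mulVec_eq_comp, dotProduct_comp_eq_partSum_dotProduct]

lemma sum_sq_partSum_div_card_le (pt : V → ι) (x : V → ℝ) :
    ∑ i, partSum pt x i ^ 2 / #{u | pt u = i} ≤ x ⬝ᵥ x := by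
  simp only [dotProduct, ← sq]
  rw [← Finset.sum_fiberwise Finset.univ pt]
  refine Finset.sum_le_sum fun i _ => ?_
  rcases (#{u | pt u = i}).eq_zero_or_pos with h | h
  · rw [h, Nat.cast_zero, div_zero]
    exact Finset.sum_nonneg fun _ _ => sq_nonneg _
  · rw [div_le_iff₀ (by exact_mod_cast h), mul_comm]
    exact sq_sum_le_card_mul_sum_sq

end partSum

section joinCliques4
variable {n₁ n₂ n₃ n₄ : ℕ}

def cliquePart : Fin 1 ⊕ (Fin n₁ ⊕ (Fin n₂ ⊕ (Fin n₃ ⊕ Fin n₄))) → Fin 5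
  | .inl _ => 0
  | .inr (.inl _) => 1
  | .inr (.inr (.inl _)) => 2
  | .inr (.inr (.inr (.inl _))) => 3
  | .inr (.inr (.inr (.inr _))) => 4

lemma joinCliques4_adj_iff {u v : Fin 1 ⊕ (Fin n₁ ⊕ (Fin n₂ ⊕ (Fin n₃ ⊕ Fin n₄)))} :
    (joinCliques4 n₁ n₂ n₃ n₄).Adj u v ↔
      u ≠ v ∧ (cliquePart u = 0 ∨ cliquePart v = 0 ∨ cliquePart u = cliquePart v) := by
  rcases u with a | a | a | a | a <;> rcases v with b | b | b | b | b <;>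
    simp [joinCliques4, graphJoin, graphSum, cliquePart]

lemma card_filter_cliquePart (i : Fin 5) :
    #{u : Fin 1 ⊕ (Fin n₁ ⊕ (Fin n₂ ⊕ (Fin n₃ ⊕ Fin n₄))) | cliquePart u = i} =
      ![1, n₁, n₂, n₃, n₄] i := by
  rw [card_filter]
  fin_cases i <;> simp [Fintype.sum_sum_type, cliquePart]

def cliqueDistPattern : Matrix (Fin 5) (Fin 5) ℝ :=
  of fun i j => if i = 0 ∨ j = 0 ∨ i = j then 1 else 2

lemma distMatrix_joinCliques4 :
    distMatrix (joinCliques4 n₁ n₂ n₃ n₄) =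
      cliqueDistPattern.submatrix cliquePart cliquePart - 1 := by
  ext u v
  have hc : ∀ w, w ≠ .inl 0 → (joinCliques4 n₁ n₂ n₃ n₄).Adj (.inl 0) w :=
    fun w hw => joinCliques4_adj_iff.mpr ⟨hw.symm, Or.inl rfl⟩
  by_cases huv : u = v
  · subst huv; simp [distMatrix, cliqueDistPattern]
  by_cases hadj : (joinCliques4 n₁ n₂ n₃ n₄).Adj u v
  · have := (joinCliques4_adj_iff.mp hadj).2
    simp [distMatrix, cliqueDistPattern, SimpleGraph.dist_eq_one_iff_adj.mpr hadj, huv, this]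
  · have := mt (joinCliques4_adj_iff.mpr ⟨huv, ·⟩) hadj
    simp [distMatrix, cliqueDistPattern, SimpleGraph.dist_eq_two_of_forall_adj hc huv hadj, huv,
      this]

lemma dotProduct_distMatrix_joinCliques4_mulVec
    (x : Fin 1 ⊕ (Fin n₁ ⊕ (Fin n₂ ⊕ (Fin n₃ ⊕ Fin n₄))) → ℝ) :
    x ⬝ᵥ distMatrix (joinCliques4 n₁ n₂ n₃ n₄) *ᵥ x =
      partSum cliquePart x ⬝ᵥ cliqueDistPattern *ᵥ partSum cliquePart x - x ⬝ᵥ x := by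
  rw [distMatrix_joinCliques4, sub_mulVec, dotProduct_sub, one_mulVec, dotProduct_submatrix_mulVec]

end joinCliques4

lemma dotProduct_cliqueDistPattern_mulVec (p : Fin 5 → ℝ) :
    p ⬝ᵥ cliqueDistPattern *ᵥ p = (p 0 + p 1 + p 2 + p 3 + p 4) ^ 2 + (p 1 + p 2 + p 3 + p 4) ^ 2
      - (p 1 ^ 2 + p 2 ^ 2 + p 3 ^ 2 + p 4 ^ 2) := by
  simp only [dotProduct, mulVec, cliqueDistPattern, of_apply, Fin.sum_univ_five, Fin.reduceEq,
    true_or, or_true, or_self, false_or, if_true, if_false]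
  ring

/-- Found numerically: close enough to the Perron vector of `distMatrix (joinCliques4 1 2 2 n₄)`,
which is constant on the parts, for every `n₄` at once. -/
def cliqueWeight : Fin 5 → ℝ := ![1, 1.659, 1.699, 1.699, 1.741]

lemma dotProduct_cliqueDistPattern_mulVec_le {p : Fin 5 → ℝ} (hp : p ⬝ᵥ cliqueWeight = 0) :
    p ⬝ᵥ cliqueDistPattern *ᵥ p ≤ 0.4137 * (p 0 ^ 2 + p 1 ^ 2 + p 2 ^ 2 / 2 + p 3 ^ 2 / 2) := by
  have hw : p 0 + 1.659 * p 1 + 1.699 * p 2 + 1.699 * p 3 + 1.741 * p 4 = 0 := by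
    simpa [dotProduct, cliqueWeight, Fin.sum_univ_five, mul_comm] using hp
  rw [dotProduct_cliqueDistPattern_mulVec]
  -- `2 (p ⬝ cliqueWeight)² + 0.4137 (p₀² + p₁² + p₂²/2 + p₃²/2) - p ⬝ C p` is a positive
  -- combination of these squares (an `LDLᵀ` decomposition with exact rational pivots).
  nlinarith [mul_self_eq_zero.mpr hw,
    sq_nonneg (p 0 + 23180 / 14137 * p 1 + 23980 / 14137 * p 2 + 23980 / 14137 * p 3
      + 24820 / 14137 * p 4),
    sq_nonneg (p 1 - 2082692183 / 7899114947 * p 2 - 2082692183 / 7899114947 * p 3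
      - 2071214297 / 7899114947 * p 4),
    sq_nonneg (p 2 - 58786967379662 / 131873970096077 * p 3
      - 58682942407058 / 131873970096077 * p 4),
    sq_nonneg (p 3 - 58682942407058 / 73087002716415 * p 4),
    sq_nonneg (p 4)]

lemma distEig_two_joinCliques4_one_two_two_lt (n₄ : ℕ) :
    distEig (joinCliques4 1 2 2 n₄) 2 < -0.5858 := by
  refine distEig_two_lt (by simp; omega) (w := cliqueWeight ∘ cliquePart) fun x hx hw => ?_
  rw [dotProduct_comp_eq_partSum_dotProduct] at hw
  set p := partSum cliquePart x
  have hN : p 0 ^ 2 + p 1 ^ 2 + p 2 ^ 2 / 2 + p 3 ^ 2 / 2 ≤ x ⬝ᵥ x := by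
    have := sum_sq_partSum_div_card_le cliquePart x
    simp only [Fin.sum_univ_five, card_filter_cliquePart, Matrix.cons_val, Nat.cast_one,
      Nat.cast_ofNat, div_one] at this
    linarith [show 0 ≤ p 4 ^ 2 / n₄ by positivity]
  have hpos : 0 < x ⬝ᵥ x :=
    lt_of_le_of_ne (Finset.sum_nonneg fun i _ => mul_self_nonneg (x i))
      (Ne.symm (dotProduct_self_eq_zero.not.mpr hx))
  rw [dotProduct_distMatrix_joinCliques4_mulVec]
  linarith [dotProduct_cliqueDistPattern_mulVec_le hw]

lemma neg_one_lt_distEig_two_joinCliques4_one_two_two (n₄ : ℕ) :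
    -1 < distEig (joinCliques4 1 2 2 n₄) 2 := by
  refine lt_distEig_two (u := (fun _ => 1) ∘ cliquePart)
    (v := (fun i => if i = 0 then 1 else 0) ∘ cliquePart) fun a b hab => ?_
  rw [show a • (fun _ => 1) ∘ cliquePart + b • (fun i => if i = 0 then 1 else 0) ∘ cliquePart =
      (fun i => a + if i = 0 then b else 0) ∘ cliquePart by funext u; simp,
    dotProduct_distMatrix_joinCliques4_mulVec, dotProduct_comp_eq_partSum_dotProduct,
    funext (partSum_comp cliquePart _), dotProduct_cliqueDistPattern_mulVec]
  simp only [dotProduct, Fin.sum_univ_five, card_filter_cliquePart, Matrix.cons_val, Fin.reduceEq,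
    if_true, if_false, Nat.cast_one, Nat.cast_ofNat]
  rcases eq_or_ne a 0 with rfl | ha
  · have hb : b ≠ 0 := by simpa using hab
    have : 0 < b ^ 2 := by positivity
    nlinarith
  · have : 0 < a ^ 2 := by positivity
    nlinarith [sq_nonneg (b + (6 + n₄) * a), (n₄.cast_nonneg : (0 : ℝ) ≤ n₄)]

theorem secondDistEig_joinCliques4_one_two_two_general (n₄ : ℕ) :
    distEig (joinCliques4 1 2 2 n₄) 2 ∈ Set.Ioo (-1 : ℝ) (-0.5858) :=
  ⟨neg_one_lt_distEig_two_joinCliques4_one_two_two n₄, distEig_two_joinCliques4_one_two_two_lt n₄⟩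

theorem secondDistEig_joinCliques4_one_two_two (n₄ : ℕ) (h : 2 ≤ n₄) :
    distEig (joinCliques4 1 2 2 n₄) 2 ∈ Set.Ioo (-1 : ℝ) (-0.5858) :=
  secondDistEig_joinCliques4_one_two_two_general n₄
end
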